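/- arXiv:1802.02730 — 5 statements merged into one kernel-verified Lean document; each statement's English description precedes it below -/
import Mathlib

section
/- Let X be a positive semidefinite n×n complex matrix, Z a positive semidefinite m×m complex matrix, and Y an n×m complex matrix. The block matrix A = [[X, Y],[Yᴴ, Z]] is positive semidefinite if and only if there exists a contraction Γ (an n×m complex matrix with operator norm at most 1) such that Y = X^{1/2} · Γ · Z^{1/2}, where X^{1/2} and Z^{1/2} denote the unique positive semidefinite square roots of X and Z. -/
open scoped Matrix Matrix.Norms.L2Operator ComplexOrder

namespace Matrix.PosSemidef

/-- The positive semidefinite square root of a positive semidefinite matrix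
(the definition removed from Mathlib, restored verbatim). -/
noncomputable def sqrt {n 𝕜 : Type*} [Fintype n] [DecidableEq n] [RCLike 𝕜]
    {A : Matrix n n 𝕜} (hA : PosSemidef A) : Matrix n n 𝕜 :=
  hA.1.eigenvectorUnitary.1 * diagonal ((↑) ∘ (√·) ∘ hA.1.eigenvalues) *
  (star hA.1.eigenvectorUnitary : Matrix n n 𝕜)

end Matrix.PosSemidef

/-!
Write `X = P²` and `Z = Q²` with `P`, `Q` the square roots. If `‖Γ‖ ≤ 1`, the block matrix
`[[1, Γ], [Γᴴ, 1]]` is positive semidefinite because its Schur complement `1 - ΓᴴΓ` is, and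
conjugating it by `diag(P, Q)` gives `[[X, PΓQ], [(PΓQ)ᴴ, Z]]`. Conversely, factor the block
matrix as `BᴴB` and split `B = [C D]` into column blocks, so that `CᴴC = P²`, `DᴴD = Q²` and
`Y = CᴴD`. From `CᴴC = P²` the map `Px ↦ Cx` is a well-defined isometry on the range of `P`, so
`C = VP` for the contraction `V = CP⁺` (`P⁺` the pseudo-inverse); likewise `D = WQ`, and
`Γ = VᴴW` works.
-/

open scoped MatrixOrder

lemma isStarProjection_cfc_mul_inv {A : Type*} [Ring A] [StarRing A] [Algebra ℝ A]
    [TopologicalSpace A] [ContinuousFunctionalCalculus ℝ A IsSelfAdjoint] {a : A}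
    (ha : (spectrum ℝ a).Finite) : IsStarProjection (cfc (fun x : ℝ => x * x⁻¹) a) := by
  refine ⟨?_, cfc_predicate _ _⟩
  rw [IsIdempotentElem, ← cfc_mul _ _ a (ha.continuousOn _) (ha.continuousOn _)]
  congr 1
  funext x
  by_cases hx : x = 0 <;> simp [hx]

namespace Matrix

variable {ι κ 𝕜 : Type*} [Fintype ι] [DecidableEq ι] [Fintype κ] [RCLike 𝕜]

namespace PosSemidef

variable {A : Matrix ι ι 𝕜} (hA : A.PosSemidef)

lemma sqrt_eq_cfc : hA.sqrt = cfc Real.sqrt A := by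
  rw [hA.1.cfc_eq, IsHermitian.cfc, Unitary.conjStarAlgAut_apply]
  rfl

lemma isHermitian_sqrt : hA.sqrt.IsHermitian := by
  rw [sqrt_eq_cfc]
  exact cfc_predicate _ _

lemma sqrt_mul_self : hA.sqrt * hA.sqrt = A := by
  rw [sqrt_eq_cfc, ← cfc_mul ..]
  conv_rhs => rw [← cfc_id' ℝ A]
  exact cfc_congr fun x hx => Real.mul_self_sqrt (spectrum_nonneg_of_nonneg hA.nonneg hx)

end PosSemidef

lemma norm_mul_eq_of_conjTranspose_mul_self_eq {μ : Type*} [Fintype μ] {C : Matrix κ ι 𝕜}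
    {D : Matrix μ ι 𝕜} (h : Cᴴ * C = Dᴴ * D) (M : Matrix ι ι 𝕜) : ‖C * M‖ = ‖D * M‖ := by
  have hM : (C * M)ᴴ * (C * M) = (D * M)ᴴ * (D * M) := by
    rw [conjTranspose_mul, conjTranspose_mul, Matrix.mul_assoc, ← Matrix.mul_assoc Cᴴ, h]
    simp only [Matrix.mul_assoc]
  rw [← mul_self_inj (norm_nonneg _) (norm_nonneg _), ← l2_opNorm_conjTranspose_mul_self,
    ← l2_opNorm_conjTranspose_mul_self, hM]

lemma IsHermitian.exists_contraction_mul_eq_of_conjTranspose_mul_self_eq {P : Matrix ι ι 𝕜}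
    (hP : P.IsHermitian) {C : Matrix κ ι 𝕜} (h : Cᴴ * C = P * P) :
    ∃ V : Matrix κ ι 𝕜, ‖V‖ ≤ 1 ∧ C = V * P := by
  -- `R` is the pseudo-inverse of `P` (thanks to `0⁻¹ = 0`) and `E = PR` the projection onto
  -- the range of `P`.
  set R := cfc (·⁻¹ : ℝ → ℝ) P
  set E := cfc (fun x : ℝ => x * x⁻¹) P
  have hcont (f : ℝ → ℝ) : ContinuousOn f (spectrum ℝ P) := P.finite_real_spectrum.continuousOn f
  have hCP : Cᴴ * C = Pᴴ * P := by rw [hP.eq, h]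
  have hPR : P * R = E := by
    simpa only [cfc_id' ℝ P] using (cfc_mul (fun x : ℝ => x) (·⁻¹) P (hcont _) (hcont _)).symm
  have hRP : R * P = P * R := by
    conv_lhs => rw [← cfc_id' ℝ P]
    conv_rhs => rw [← cfc_id' ℝ P]
    exact (cfc_commute_cfc _ _ P).eq
  have hPE : P * E = P := by
    calc P * E = cfc (fun x : ℝ => x * (x * x⁻¹)) P := by
          rw [cfc_mul _ _ P (hcont _) (hcont _), cfc_id' ℝ P]
      _ = cfc (fun x : ℝ => x) P := by
        congr 1; funext x; by_cases hx : x = 0 <;> simp [hx]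
      _ = P := cfc_id' ℝ P
  have hCE : C * E = C := by
    have : ‖C * (E - 1)‖ = 0 := by
      rw [norm_mul_eq_of_conjTranspose_mul_self_eq hCP, mul_sub, hPE, mul_one, sub_self, norm_zero]
    rwa [norm_eq_zero, Matrix.mul_sub, Matrix.mul_one, sub_eq_zero] at this
  refine ⟨C * R, ?_, ?_⟩
  · rw [norm_mul_eq_of_conjTranspose_mul_self_eq hCP, hPR]
    exact (isStarProjection_cfc_mul_inv P.finite_real_spectrum).norm_le
  · rw [Matrix.mul_assoc, hRP, hPR, hCE]

lemma norm_le_one_iff_posSemidef_one_sub_conjTranspose_mul_self {Γ : Matrix κ ι ℂ} :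
    ‖Γ‖ ≤ 1 ↔ (1 - Γᴴ * Γ).PosSemidef := by
  rw [← nonneg_iff_posSemidef, sub_nonneg, ← CStarAlgebra.norm_le_one_iff_of_nonneg _
    (posSemidef_conjTranspose_mul_self Γ).nonneg, l2_opNorm_conjTranspose_mul_self, ← sq,
    sq_le_one_iff₀ (norm_nonneg Γ)]

variable [DecidableEq κ]

lemma posSemidef_fromBlocks_one_of_norm_le_one {Γ : Matrix ι κ ℂ} (hΓ : ‖Γ‖ ≤ 1) :
    (fromBlocks 1 Γ Γᴴ 1).PosSemidef := by
  let : Invertible (1 : Matrix ι ι ℂ) := invertibleOne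
  refine (PosDef.fromBlocks₁₁ Γ 1 PosDef.one).mpr ?_
  rw [inv_one, Matrix.mul_one]
  exact norm_le_one_iff_posSemidef_one_sub_conjTranspose_mul_self.mp hΓ

lemma posSemidef_fromBlocks_mul_self_of_norm_le_one {P : Matrix ι ι ℂ} {Q : Matrix κ κ ℂ}
    (hP : P.IsHermitian) (hQ : Q.IsHermitian) {Γ : Matrix ι κ ℂ} (hΓ : ‖Γ‖ ≤ 1) :
    (fromBlocks (P * P) (P * Γ * Q) (P * Γ * Q)ᴴ (Q * Q)).PosSemidef := by
  convert (posSemidef_fromBlocks_one_of_norm_le_one hΓ).conjTranspose_mul_mul_same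
    (fromBlocks P 0 0 Q) using 1
  simp [fromBlocks_conjTranspose, fromBlocks_multiply, hP.eq, hQ.eq, Matrix.mul_assoc]

lemma exists_contraction_of_posSemidef_fromBlocks_mul_self {P : Matrix ι ι 𝕜}
    {Q : Matrix κ κ 𝕜} (hP : P.IsHermitian) (hQ : Q.IsHermitian) {Y : Matrix ι κ 𝕜}
    (h : (fromBlocks (P * P) Y Yᴴ (Q * Q)).PosSemidef) :
    ∃ Γ : Matrix ι κ 𝕜, ‖Γ‖ ≤ 1 ∧ Y = P * Γ * Q := by
  have hB : h.sqrtᴴ * h.sqrt = fromBlocks (P * P) Y Yᴴ (Q * Q) := by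
    rw [h.isHermitian_sqrt.eq, h.sqrt_mul_self]
  rw [← fromCols_toCols h.sqrt, conjTranspose_fromCols_eq_fromRows_conjTranspose,
    fromRows_mul_fromCols] at hB
  obtain ⟨hX, hY, -, hZ⟩ := fromBlocks_inj.mp hB
  obtain ⟨V, hV, hCV⟩ := hP.exists_contraction_mul_eq_of_conjTranspose_mul_self_eq hX
  obtain ⟨W, hW, hDW⟩ := hQ.exists_contraction_mul_eq_of_conjTranspose_mul_self_eq hZ
  refine ⟨Vᴴ * W, ?_, ?_⟩
  · calc ‖Vᴴ * W‖ ≤ ‖Vᴴ‖ * ‖W‖ := l2_opNorm_mul _ _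
      _ ≤ 1 := by rw [l2_opNorm_conjTranspose]; exact mul_le_one₀ hV (norm_nonneg _) hW
  · rw [← hY, hCV, hDW, conjTranspose_mul, hP.eq]
    simp only [Matrix.mul_assoc]

end Matrix

/-- **Structure of a positive semidefinite block matrix.**
The block matrix `[[X, Y],[Yᴴ, Z]]` (with `X`, `Z` positive semidefinite) is positive
semidefinite if and only if `Y = X^{1/2} · Γ · Z^{1/2}` for some contraction `Γ`
(a matrix of operator norm at most 1). -/
theorem posSemidef_fromBlocks_iff_exists_contraction
    {n m : ℕ} {X : Matrix (Fin n) (Fin n) ℂ} {Z : Matrix (Fin m) (Fin m) ℂ}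
    (hX : X.PosSemidef) (hZ : Z.PosSemidef) (Y : Matrix (Fin n) (Fin m) ℂ) :
    (Matrix.fromBlocks X Y Yᴴ Z).PosSemidef ↔
      ∃ Γ : Matrix (Fin n) (Fin m) ℂ, ‖Γ‖ ≤ 1 ∧ Y = hX.sqrt * Γ * hZ.sqrt := by
  have hP := hX.isHermitian_sqrt
  have hQ := hZ.isHermitian_sqrt
  conv_lhs => rw [← hX.sqrt_mul_self, ← hZ.sqrt_mul_self]
  refine ⟨Matrix.exists_contraction_of_posSemidef_fromBlocks_mul_self hP hQ, ?_⟩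
  rintro ⟨Γ, hΓ, rfl⟩
  exact Matrix.posSemidef_fromBlocks_mul_self_of_norm_le_one hP hQ hΓ
end

section
/- Let H and K be complex Hilbert spaces and let X, Y : H → K be continuous linear operators. The following are equivalent: (1) there exists a contraction Γ : K → K (a continuous linear operator with operator norm at most 1) such that X = Γ ∘ Y; (2) X*X ≤ Y*Y, i.e. the operator Y*Y − X*X is positive (self-adjoint with ⟪(Y*Y − X*X)h, h⟫ ≥ 0 for all h ∈ H). -/
/-!
Positivity of `Y*Y - X*X` says exactly that `‖X h‖ ≤ ‖Y h‖` for all `h`. Then `Y h ↦ X h` is a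
well-defined contraction on the range of `Y`; it extends by continuity to the closure of the range,
and composing with the orthogonal projection onto that closure gives `Γ`.
-/

open ContinuousLinearMap

namespace LinearMap

variable {𝕜 E F K : Type*} [RCLike 𝕜] [AddCommGroup E] [Module 𝕜 E]
  [NormedAddCommGroup F] [NormedSpace 𝕜 F] [CompleteSpace F]
  [NormedAddCommGroup K] [InnerProductSpace 𝕜 K] [CompleteSpace K]

theorem exists_opNorm_le_comp_eq_of_norm_le (f : E →ₗ[𝕜] F) (e : E →ₗ[𝕜] K) {C : ℝ}
    (hC : 0 ≤ C) (h : ∀ x, ‖f x‖ ≤ C * ‖e x‖) :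
    ∃ g : K →L[𝕜] F, ‖g‖ ≤ C ∧ ∀ x, g (e x) = f x := by
  set M := (range e).topologicalClosure
  set e' : E →ₗ[𝕜] M :=
    e.codRestrict M fun x => (range e).le_topologicalClosure (mem_range_self e x)
  have he' : DenseRange e' := Subtype.dense_iff.2 <| by
    rw [← Set.range_comp]
    exact (Submodule.topologicalClosure_coe _).subset
  refine ⟨f.extendOfNorm e' ∘L M.orthogonalProjectionOnto, ?_, fun x => ?_⟩
  · calc _ ≤ ‖f.extendOfNorm e'‖ * ‖M.orthogonalProjectionOnto‖ := opNorm_comp_le _ _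
      _ ≤ C * 1 := mul_le_mul (opNorm_extendOfNorm_le he' hC h)
          M.orthogonalProjectionOnto_norm_le (norm_nonneg _) hC
      _ = C := mul_one C
  · have hP : M.orthogonalProjectionOnto (e x) = e' x :=
      M.orthogonalProjectionOnto_mem_subspace_eq_self (e' x)
    rw [ContinuousLinearMap.comp_apply, hP, extendOfNorm_eq he' ⟨C, h⟩]

end LinearMap

namespace ContinuousLinearMap

variable {𝕜 E F : Type*} [RCLike 𝕜]
  [NormedAddCommGroup E] [InnerProductSpace 𝕜 E] [CompleteSpace E]
  [NormedAddCommGroup F] [InnerProductSpace 𝕜 F] [CompleteSpace F]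

theorem isPositive_adjoint_comp_sub_adjoint_comp_iff (X Y : E →L[𝕜] F) :
    (adjoint Y ∘L Y - adjoint X ∘L X).IsPositive ↔ ∀ x, ‖X x‖ ≤ ‖Y x‖ := by
  have hsa : IsSelfAdjoint (adjoint Y ∘L Y - adjoint X ∘L X) :=
    (isPositive_adjoint_comp_self Y).isSelfAdjoint.sub (isPositive_adjoint_comp_self X).isSelfAdjoint
  simp only [isPositive_def', hsa, true_and, reApplyInnerSelf_apply, sub_apply, inner_sub_left,
    map_sub, ← apply_norm_sq_eq_inner_adjoint_left, sub_nonneg]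
  exact forall_congr' fun x => pow_le_pow_iff_left₀ (norm_nonneg _) (norm_nonneg _) two_ne_zero

end ContinuousLinearMap

/-- **Douglas-type factorization.** For continuous linear operators `X Y : H → K` between complex
Hilbert spaces, there exists a contraction `Γ : K → K` with `X = Γ ∘ Y` if and only if
`X*X ≤ Y*Y`, i.e. `Y*Y − X*X` is a positive operator. -/
theorem exists_contraction_factor_iff_adjoint_comp_le
    {H K : Type*} [NormedAddCommGroup H] [InnerProductSpace ℂ H] [CompleteSpace H]
    [NormedAddCommGroup K] [InnerProductSpace ℂ K] [CompleteSpace K]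
    (X Y : H →L[ℂ] K) :
    (∃ Γ : K →L[ℂ] K, ‖Γ‖ ≤ 1 ∧ X = Γ.comp Y) ↔
      (ContinuousLinearMap.adjoint Y ∘L Y - ContinuousLinearMap.adjoint X ∘L X).IsPositive := by
  rw [ContinuousLinearMap.isPositive_adjoint_comp_sub_adjoint_comp_iff]
  constructor
  · rintro ⟨Γ, hΓ, rfl⟩ x
    simpa using Γ.le_of_opNorm_le hΓ (Y x)
  · intro h
    obtain ⟨Γ, hΓ, hΓY⟩ := (X : H →ₗ[ℂ] K).exists_opNorm_le_comp_eq_of_norm_le (Y : H →ₗ[ℂ] K)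
      zero_le_one (by simpa using h)
    exact ⟨Γ, hΓ, ContinuousLinearMap.ext fun x => (hΓY x).symm⟩
end

section
/- Let T₁ be an n×m₁ complex matrix and T₂ an n×m₂ complex matrix, and let T = [T₁ T₂] be the n×(m₁+m₂) row block matrix. Then the operator norm of T is at most 1 if and only if there exist contractions Γ₁ (n×m₁) and Γ₂ (n×m₂) such that T₁ = Γ₁ and T₂ = D_{Γ₁ᴴ} · Γ₂, where D_{Γ₁ᴴ} = (I − Γ₁Γ₁ᴴ)^{1/2}. -/
/-!
In the Loewner order, `‖[T₁ T₂]‖ ≤ 1` says `T₁T₁ᴴ + T₂T₂ᴴ ≤ 1`, i.e. `T₂T₂ᴴ ≤ D²` with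
`D = (1 - T₁T₁ᴴ)^{1/2}`. If `T₂ = DΓ₂` with `Γ₂Γ₂ᴴ ≤ 1`, conjugating by `D` gives `T₂T₂ᴴ ≤ D²`.
Conversely `T₂T₂ᴴ ≤ D²` is the hypothesis of Douglas' factorization lemma: with `D⁺` the
pseudo-inverse of `D`, the projection `1 - DD⁺` kills `D`, hence kills `T₂`, so `Γ₂ = D⁺T₂`
satisfies `DΓ₂ = T₂` and `Γ₂Γ₂ᴴ ≤ D⁺D²D⁺ = DD⁺ ≤ 1`.
-/

open scoped Matrix Matrix.Norms.L2Operator ComplexOrder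

/-- The unique positive semidefinite square root of a matrix, extended by `0` to matrices that
are not positive semidefinite. -/
noncomputable def psdSqrt {m : ℕ} (A : Matrix (Fin m) (Fin m) ℂ) : Matrix (Fin m) (Fin m) ℂ :=
  letI := Classical.dec A.PosSemidef
  if h : A.PosSemidef then
    (h.1.eigenvectorUnitary : Matrix (Fin m) (Fin m) ℂ) *
      Matrix.diagonal (fun i => ((Real.sqrt (h.1.eigenvalues i) : ℝ) : ℂ)) *
      (star h.1.eigenvectorUnitary : Matrix (Fin m) (Fin m) ℂ)
  else 0

open scoped MatrixOrder

/-! Since `(0 : ℝ)⁻¹ = 0`, `cfc (·⁻¹ : ℝ → ℝ) a` is the pseudo-inverse of a self-adjoint `a`;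
finiteness of the spectrum makes `·⁻¹` continuous on it. -/

section PseudoInverse

variable {A : Type*} [Ring A] [StarRing A] [Algebra ℝ A] [TopologicalSpace A]
  [ContinuousFunctionalCalculus ℝ A IsSelfAdjoint] {a : A} [Finite (spectrum ℝ a)]

theorem cfc_mul_cfc_of_finite (f g : ℝ → ℝ) :
    cfc f a * cfc g a = cfc (fun x => f x * g x) a :=
  (cfc_mul f g a ((Set.toFinite _).continuousOn f) ((Set.toFinite _).continuousOn g)).symm

theorem mul_cfc_inv (ha : IsSelfAdjoint a) :
    a * cfc (·⁻¹ : ℝ → ℝ) a = cfc (fun x : ℝ => x * x⁻¹) a := by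
  conv_lhs => enter [1]; rw [← cfc_id' ℝ a ha]
  rw [cfc_mul_cfc_of_finite]

theorem mul_cfc_inv_mul_self (ha : IsSelfAdjoint a) :
    a * cfc (·⁻¹ : ℝ → ℝ) a * a = a := by
  conv_lhs => enter [2]; rw [← cfc_id' ℝ a ha]
  rw [mul_cfc_inv ha, cfc_mul_cfc_of_finite]
  conv_rhs => rw [← cfc_id' ℝ a ha]
  congr 1 with x
  rcases eq_or_ne x 0 with rfl | hx <;> simp [*]

theorem cfc_inv_mul_mul_self_mul_cfc_inv (ha : IsSelfAdjoint a) :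
    cfc (·⁻¹ : ℝ → ℝ) a * (a * a) * cfc (·⁻¹ : ℝ → ℝ) a = a * cfc (·⁻¹ : ℝ → ℝ) a := by
  conv_lhs => enter [1, 2]; rw [← cfc_id' ℝ a ha]
  rw [cfc_mul_cfc_of_finite, cfc_mul_cfc_of_finite, cfc_mul_cfc_of_finite, mul_cfc_inv ha]
  congr 1 with x
  rcases eq_or_ne x 0 with rfl | hx <;> field_simp

theorem mul_cfc_inv_le_one [PartialOrder A] [StarOrderedRing A] (ha : IsSelfAdjoint a) :
    a * cfc (·⁻¹ : ℝ → ℝ) a ≤ 1 := by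
  rw [mul_cfc_inv ha]
  refine cfc_le_one _ _ fun x _ => ?_
  rcases eq_or_ne x 0 with rfl | hx <;> simp [*]

end PseudoInverse

namespace Matrix

variable {𝕜 m n : Type*} [RCLike 𝕜] [Fintype m] [Fintype n] [DecidableEq n]

theorem exists_mul_eq_of_mul_conjTranspose_le_mul_self {D : Matrix n n 𝕜} (hD : IsSelfAdjoint D)
    {T : Matrix n m 𝕜} (hT : T * Tᴴ ≤ D * D) : ∃ Γ : Matrix n m 𝕜, Γ * Γᴴ ≤ 1 ∧ D * Γ = T := by
  set E := cfc (·⁻¹ : ℝ → ℝ) D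
  have hE : IsSelfAdjoint E := cfc_predicate _ _
  set R := 1 - D * E with hR_def
  have hR : IsSelfAdjoint R := .sub (.one _) (mul_cfc_inv hD ▸ cfc_predicate _ _)
  have hRD : R * D = 0 := by rw [sub_mul, one_mul, mul_cfc_inv_mul_self hD, sub_self]
  have hRT : R * T = 0 := by
    refine self_mul_conjTranspose_eq_zero.mp
      (le_antisymm ?_ (posSemidef_self_mul_conjTranspose _).nonneg)
    calc R * T * (R * T)ᴴ = R * (T * Tᴴ) * R := by
          rw [conjTranspose_mul, hR.isHermitian.eq]
          simp only [Matrix.mul_assoc]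
      _ ≤ R * (D * D) * R := hR.conjugate_le_conjugate hT
      _ = 0 := by rw [← Matrix.mul_assoc, hRD, Matrix.zero_mul, Matrix.zero_mul]
  refine ⟨E * T, ?_, ?_⟩
  · calc E * T * (E * T)ᴴ = E * (T * Tᴴ) * E := by
          rw [conjTranspose_mul, hE.isHermitian.eq]
          simp only [Matrix.mul_assoc]
      _ ≤ E * (D * D) * E := hE.conjugate_le_conjugate hT
      _ = D * E := cfc_inv_mul_mul_self_mul_cfc_inv hD
      _ ≤ 1 := mul_cfc_inv_le_one hD
  · rwa [hR_def, Matrix.sub_mul, Matrix.one_mul, sub_eq_zero, eq_comm, Matrix.mul_assoc] at hRT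

variable [DecidableEq m]

theorem l2_opNorm_le_one_iff_mul_conjTranspose_le_one (A : Matrix m n ℂ) :
    ‖A‖ ≤ 1 ↔ A * Aᴴ ≤ 1 := by
  have hnorm : ‖A * Aᴴ‖ = ‖A‖ * ‖A‖ := by
    simpa [l2_opNorm_conjTranspose] using l2_opNorm_conjTranspose_mul_self Aᴴ
  rw [← CStarAlgebra.norm_le_one_iff_of_nonneg _ (posSemidef_self_mul_conjTranspose A).nonneg,
    hnorm, ← abs_le_one_iff_mul_self_le_one, abs_norm]

theorem l2_opNorm_fromCols_le_one_iff {n' : Type*} [Fintype n'] [DecidableEq n']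
    (A : Matrix m n ℂ) (B : Matrix m n' ℂ) :
    ‖fromCols A B‖ ≤ 1 ↔ A * Aᴴ + B * Bᴴ ≤ 1 := by
  rw [l2_opNorm_le_one_iff_mul_conjTranspose_le_one,
    conjTranspose_fromCols_eq_fromRows_conjTranspose, fromCols_mul_fromRows]

end Matrix

theorem psdSqrt_eq_sqrt {m : ℕ} {A : Matrix (Fin m) (Fin m) ℂ} (hA : 0 ≤ A) :
    psdSqrt A = CFC.sqrt A := by
  have hA' := Matrix.nonneg_iff_posSemidef.mp hA
  rw [CFC.sqrt_eq_real_sqrt A hA, cfcₙ_eq_cfc, hA'.1.cfc_eq, Matrix.IsHermitian.cfc,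
    Unitary.conjStarAlgAut_apply, psdSqrt, dif_pos hA']
  rfl

open Matrix

/-- **Structure of a row contraction with two blocks.** The row block matrix `T = [T₁ T₂]` has
operator norm at most 1 if and only if there exist contractions `Γ₁`, `Γ₂` with `T₁ = Γ₁` and
`T₂ = D_{Γ₁ᴴ}·Γ₂`, where `D_{Γ₁ᴴ} = (I − Γ₁Γ₁ᴴ)^{1/2}`. -/
theorem rowContraction_iff_exists_contractions
    {n m₁ m₂ : ℕ} (T₁ : Matrix (Fin n) (Fin m₁) ℂ) (T₂ : Matrix (Fin n) (Fin m₂) ℂ) :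
    ‖Matrix.fromCols T₁ T₂‖ ≤ 1 ↔
      ∃ (Γ₁ : Matrix (Fin n) (Fin m₁) ℂ) (Γ₂ : Matrix (Fin n) (Fin m₂) ℂ),
        ‖Γ₁‖ ≤ 1 ∧ ‖Γ₂‖ ≤ 1 ∧ T₁ = Γ₁ ∧ T₂ = psdSqrt (1 - Γ₁ * Γ₁ᴴ) * Γ₂ := by
  rw [l2_opNorm_fromCols_le_one_iff]
  simp only [l2_opNorm_le_one_iff_mul_conjTranspose_le_one]
  constructor
  · intro h
    have hT₂ : T₂ * T₂ᴴ ≤ 1 - T₁ * T₁ᴴ := le_sub_iff_add_le'.mpr h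
    have hP : 0 ≤ 1 - T₁ * T₁ᴴ := (posSemidef_self_mul_conjTranspose T₂).nonneg.trans hT₂
    obtain ⟨Γ₂, hΓ₂, hDΓ₂⟩ := exists_mul_eq_of_mul_conjTranspose_le_mul_self
      (CFC.sqrt_nonneg _).isSelfAdjoint (by rwa [CFC.sqrt_mul_sqrt_self _ hP])
    exact ⟨T₁, Γ₂, sub_nonneg.mp hP, hΓ₂, rfl, by rw [psdSqrt_eq_sqrt hP, hDΓ₂]⟩
  · rintro ⟨_, Γ₂, h₁, h₂, rfl, rfl⟩
    have hP : 0 ≤ 1 - T₁ * T₁ᴴ := sub_nonneg.mpr h₁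
    rw [psdSqrt_eq_sqrt hP, ← le_sub_iff_add_le']
    set D := CFC.sqrt (1 - T₁ * T₁ᴴ)
    calc D * Γ₂ * (D * Γ₂)ᴴ = D * (Γ₂ * Γ₂ᴴ) * D := by
          rw [conjTranspose_mul, (CFC.sqrt_nonneg _).isSelfAdjoint.isHermitian.eq]
          simp only [Matrix.mul_assoc]
      _ ≤ D * 1 * D := conjugate_le_conjugate_of_nonneg h₂ (CFC.sqrt_nonneg _)
      _ = 1 - T₁ * T₁ᴴ := by rw [Matrix.mul_one, CFC.sqrt_mul_sqrt_self _ hP]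
end

section
/- Let H be a complex Hilbert space and let R : ℤ → L(H) be an operator-valued sequence with R₀ = I and R_{−n} = (R_n)* for all n, which is positive-definite in the sense that ∑_{i,j=0}^{N} ⟪R_{i−j} h_i, h_j⟫ ≥ 0 for every N and every finite family h_0, …, h_N ∈ H. Then there exist a complex Hilbert space K, a linear isometric embedding V : H → K, and an isometry U : K → K such that for all n ≥ 0 and all x, y ∈ H one has ⟪R_n x, y⟫ = ⟪Uⁿ (V x), V y⟫; equivalently R_n = P_H Uⁿ|_H, where P_H is the orthogonal projection of K onto the image of H (Naimark dilation theorem). -/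
/-!
The Toeplitz kernel `(i, j) ↦ R (j - i)` on `ℕ` is positive semidefinite, so by Moore's theorem it
is the kernel of a reproducing kernel Hilbert space `K`: its kernel functions satisfy
`⟪kerFun n x, kerFun m y⟫ = ⟪R (n - m) x, y⟫`. This Gram matrix is invariant under `n ↦ n + 1`,
so `kerFun n x ↦ kerFun (n + 1) x` extends from the dense span of the kernel functions to an
isometry `U` of `K`. Then `V := kerFun 0` is isometric because `R 0 = 1`, and `Uⁿ (V x) = kerFun n x`.
-/

universe u

open scoped ComplexOrder InnerProductSpace

section GramIsometry

variable {𝕜 ι E F : Type*} [RCLike 𝕜] [NormedAddCommGroup E] [InnerProductSpace 𝕜 E]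
  [NormedAddCommGroup F] [InnerProductSpace 𝕜 F]

theorem inner_linearCombination_eq_of_inner_eq {e : ι → E} {e' : ι → F}
    (he : ∀ i j, ⟪e i, e j⟫_𝕜 = ⟪e' i, e' j⟫_𝕜) (c d : ι →₀ 𝕜) :
    ⟪Finsupp.linearCombination 𝕜 e c, Finsupp.linearCombination 𝕜 e d⟫_𝕜 =
      ⟪Finsupp.linearCombination 𝕜 e' c, Finsupp.linearCombination 𝕜 e' d⟫_𝕜 := by
  simp [Finsupp.linearCombination_apply, Finsupp.sum_inner, Finsupp.inner_sum, inner_smul_left,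
    inner_smul_right, he]

theorem exists_linearIsometry_apply_eq_of_inner_eq [CompleteSpace F] {e : ι → E} {e' : ι → F}
    (hdense : (Submodule.span 𝕜 (Set.range e)).topologicalClosure = ⊤)
    (he : ∀ i j, ⟪e i, e j⟫_𝕜 = ⟪e' i, e' j⟫_𝕜) :
    ∃ T : E →ₗᵢ[𝕜] F, ∀ i, T (e i) = e' i := by
  set L := Finsupp.linearCombination 𝕜 e
  set L' := Finsupp.linearCombination 𝕜 e'
  have hnorm (c : ι →₀ 𝕜) : ‖L' c‖ = ‖L c‖ := by
    rw [norm_eq_sqrt_re_inner (𝕜 := 𝕜), norm_eq_sqrt_re_inner (𝕜 := 𝕜),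
      inner_linearCombination_eq_of_inner_eq he]
  have hL : DenseRange L := by
    rw [DenseRange, ← LinearMap.coe_range, Finsupp.range_linearCombination,
      Submodule.dense_iff_topologicalClosure_eq_top, hdense]
  have hext (c : ι →₀ 𝕜) : L'.extendOfNorm L (L c) = L' c :=
    LinearMap.extendOfNorm_eq hL ⟨1, fun c => by rw [one_mul, hnorm]⟩ c
  refine ⟨⟨(L'.extendOfNorm L).toLinearMap, fun x => ?_⟩, fun i => ?_⟩
  · refine hL.induction_on x (isClosed_eq (by fun_prop) continuous_norm) fun c => ?_
    simp [hext, hnorm]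
  · simpa [L, L'] using hext (Finsupp.single i 1)

end GramIsometry

namespace RKHS

variable {𝕜 X V H : Type*} [RCLike 𝕜] [NormedAddCommGroup V] [InnerProductSpace 𝕜 V]
  [CompleteSpace V] [NormedAddCommGroup H] [InnerProductSpace 𝕜 H] [CompleteSpace H]
  [RKHS 𝕜 H X V]

theorem exists_linearIsometry_kerFun_eq_kerFun_comp (σ : X → X)
    (hσ : ∀ x y, kernel H (σ x) (σ y) = kernel H x y) :
    ∃ T : H →ₗᵢ[𝕜] H, ∀ x v, T (kerFun H x v) = kerFun H (σ x) v := by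
  obtain ⟨T, hT⟩ := exists_linearIsometry_apply_eq_of_inner_eq (𝕜 := 𝕜)
    (e := fun p : X × V => kerFun H p.1 p.2) (e' := fun p => kerFun H (σ p.1) p.2)
    (by simpa [Set.range, Prod.exists] using kerFun_dense H)
    (fun p q => by simp only [← kernel_inner, hσ])
  exact ⟨T, fun x v => hT (x, v)⟩

end RKHS

section Toeplitz

variable {H : Type*} [NormedAddCommGroup H] [InnerProductSpace ℂ H]

def toeplitzKernel (R : ℤ → (H →L[ℂ] H)) : Matrix ℕ ℕ (H →L[ℂ] H) :=
  .of fun i j => R ((j : ℤ) - i)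

theorem finsuppSum_toeplitz_inner_nonneg {R : ℤ → (H →L[ℂ] H)}
    (hpos : ∀ (N : ℕ) (h : Fin (N + 1) → H),
      0 ≤ ∑ i : Fin (N + 1), ∑ j : Fin (N + 1), ⟪R ((i : ℤ) - (j : ℤ)) (h i), h j⟫_ℂ)
    (v : ℕ →₀ H) :
    0 ≤ v.sum fun i x => v.sum fun j y => ⟪R ((i : ℤ) - (j : ℤ)) x, y⟫_ℂ := by
  set N := v.support.sup id
  have hsupp : v.support ⊆ Finset.range (N + 1) := fun i hi =>
    Finset.mem_range_succ_iff.2 (Finset.le_sup (f := id) hi)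
  convert hpos N fun i => v i using 1
  rw [Finsupp.sum_of_support_subset v hsupp _ (by simp), ← Fin.sum_univ_eq_sum_range]
  refine Finset.sum_congr rfl fun i _ => ?_
  rw [Finsupp.sum_of_support_subset v hsupp _ (by simp), ← Fin.sum_univ_eq_sum_range]

variable [CompleteSpace H]

theorem isHermitian_toeplitzKernel {R : ℤ → (H →L[ℂ] H)}
    (hRadj : ∀ n : ℤ, R (-n) = ContinuousLinearMap.adjoint (R n)) :
    (toeplitzKernel R).IsHermitian :=
  Matrix.IsHermitian.ext fun i j => by
    simp [toeplitzKernel, ContinuousLinearMap.star_eq_adjoint, ← hRadj]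

theorem posSemidef_toeplitzKernel {R : ℤ → (H →L[ℂ] H)}
    (hRadj : ∀ n : ℤ, R (-n) = ContinuousLinearMap.adjoint (R n))
    (hpos : ∀ (N : ℕ) (h : Fin (N + 1) → H),
      0 ≤ ∑ i : Fin (N + 1), ∑ j : Fin (N + 1), ⟪R ((i : ℤ) - (j : ℤ)) (h i), h j⟫_ℂ) :
    (toeplitzKernel R).PosSemidef := by
  refine (RKHS.posSemidef_tfae.out 2 0).mp ?_
  refine ⟨isHermitian_toeplitzKernel hRadj, fun v => ?_⟩
  exact (Complex.le_def.1 (finsuppSum_toeplitz_inner_nonneg hpos v)).1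

end Toeplitz

/-- **Naimark dilation theorem.** Let `R : ℤ → L(H)` be an operator-valued sequence on a complex
Hilbert space `H` with `R 0 = I`, `R (−n) = (R n)*`, and which is positive-definite in the sense
that `∑_{i,j} ⟪R_{i−j} h_i, h_j⟫ ≥ 0` for all finite families of vectors. Then there exist a
complex Hilbert space `K`, a linear isometric embedding `V : H → K` and an isometry `U : K → K`
such that `⟪R_n x, y⟫ = ⟪Uⁿ (V x), V y⟫` for all `n ≥ 0`, i.e. `R_n = P_H Uⁿ |_H`. -/
theorem naimark_dilation {H : Type u}
    [NormedAddCommGroup H] [InnerProductSpace ℂ H] [CompleteSpace H]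
    (R : ℤ → (H →L[ℂ] H)) (hR0 : R 0 = 1)
    (hRadj : ∀ n : ℤ, R (-n) = ContinuousLinearMap.adjoint (R n))
    (hpos : ∀ (N : ℕ) (h : Fin (N + 1) → H),
      0 ≤ ∑ i : Fin (N + 1), ∑ j : Fin (N + 1),
            (inner ℂ (R ((i : ℤ) - (j : ℤ)) (h i)) (h j) : ℂ)) :
    ∃ (K : Type u) (_ : NormedAddCommGroup K) (_ : InnerProductSpace ℂ K) (_ : CompleteSpace K)
      (V : H →ₗᵢ[ℂ] K) (U : K →L[ℂ] K),
      Isometry U ∧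
      ∀ (n : ℕ) (x y : H), (inner ℂ ((U ^ n) (V x)) (V y) : ℂ) = inner ℂ (R (n : ℤ) x) y := by
  have : Fact (toeplitzKernel R).PosSemidef := ⟨posSemidef_toeplitzKernel hRadj hpos⟩
  let K := RKHS.OfKernel (toeplitzKernel R)
  have hkernel : RKHS.kernel K = toeplitzKernel R := RKHS.OfKernel.kernel_ofKernel
  have hgram (m n : ℕ) (x y : H) :
      ⟪RKHS.kerFun K n x, RKHS.kerFun K m y⟫_ℂ = ⟪R (n - m) x, y⟫_ℂ := by
    rw [← RKHS.kernel_inner, hkernel]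
    rfl
  let V : H →ₗᵢ[ℂ] K :=
    (RKHS.kerFun K 0).toLinearMap.isometryOfInner fun x y => by simp [hgram, hR0]
  obtain ⟨U, hU⟩ := RKHS.exists_linearIsometry_kerFun_eq_kerFun_comp (H := K) Nat.succ
    fun m n => by rw [hkernel]; simp [toeplitzKernel]
  have hpow (n : ℕ) (x : H) : (U.toContinuousLinearMap ^ n) (V x) = RKHS.kerFun K n x := by
    induction n with
    | zero => rfl
    | succ n ih => rw [pow_succ', mul_apply_eq_comp, ih]; exact hU n x
  refine ⟨K, inferInstance, inferInstance, inferInstance, V, U.toContinuousLinearMap, U.isometry,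
    fun n x y => ?_⟩
  rw [hpow]
  exact (hgram 0 n x y).trans (by simp)
end

section
/- Let 𝔰𝔬(n) be the real Lie algebra of skew-symmetric n×n real matrices (the skew-adjoint matrices for the transpose), with Lie bracket [X,Y] = XY − YX. The Killing form of 𝔰𝔬(n), defined by B(X,Y) = tr(ad(X) ∘ ad(Y)), satisfies B(X,Y) = (n−2) · tr(XY) for all X, Y ∈ 𝔰𝔬(n); equivalently, −B(X,Y) = (n−2) · tr(X Yᵀ). -/
/-!
The composite `ad X ∘ ad Y` on `𝔰𝔬(n)` is the restriction of `T = ad X ∘ ad Y` on `𝔤𝔩(n)`.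
The map `M ↦ M - Mᵀ` sends `𝔤𝔩(n)` into `𝔰𝔬(n)` and is multiplication by `2` on `𝔰𝔬(n)`,
so `2 B(X, Y) = tr T - tr (T ∘ transpose)`. In the basis of matrix units,
`tr (M ↦ A M B) = tr A · tr B` and `tr (M ↦ A Mᵀ B) = tr (A Bᵀ)`; for skew-symmetric `X, Y`
this gives `tr T = 2n tr (XY)` and `tr (T ∘ transpose) = 4 tr (XY)`.
-/

open scoped Matrix

attribute [local instance 100] LieRing.ofAssociativeRing

/-- The Lie algebra `𝔰𝔬(n)` of skew-symmetric real `n × n` matrices, realized as the Lie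
subalgebra of matrices that are skew-adjoint with respect to the identity bilinear form. -/
noncomputable abbrev so (n : ℕ) : LieSubalgebra ℝ (Matrix (Fin n) (Fin n) ℝ) :=
  skewAdjointMatricesLieSubalgebra (1 : Matrix (Fin n) (Fin n) ℝ)

section PID

variable {R : Type*} [CommRing R] [IsDomain R] [IsPrincipalIdealRing R]

theorem LinearMap.trace_comp_eq_mul_trace_restrict {M : Type*} [AddCommGroup M] [Module R M]
    [Module.Finite R M] [Module.Free R M] (p : Submodule R M) (f g : Module.End R M)
    (hf : ∀ x ∈ p, f x ∈ p) (hg : ∀ x, g x ∈ p) (c : R) (hgp : ∀ x ∈ p, g x = c • x) :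
    trace R M (f ∘ₗ g) = c * trace R p (f.restrict hf) := by
  rw [← trace_restrict_eq_of_forall_mem p _ fun x ↦ hf (g x) (hg x), ← smul_eq_mul, ← map_smul]
  congr 1
  ext x
  simp [hgp x x.2]

theorem LieSubalgebra.mul_killingForm_eq_trace_comp {L : Type*} [LieRing L] [LieAlgebra R L]
    [Module.Finite R L] [Module.Free R L] (K : LieSubalgebra R L) (x y : K)
    (g : Module.End R L) (hg : ∀ z, g z ∈ K) (c : R) (hgK : ∀ z ∈ K, g z = c • z) :
    c * killingForm R K x y =
      LinearMap.trace R L ((LieAlgebra.ad R L x ∘ₗ LieAlgebra.ad R L y) ∘ₗ g) := by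
  rw [killingForm_apply_apply]
  exact (LinearMap.trace_comp_eq_mul_trace_restrict K.toSubmodule
    (LieAlgebra.ad R L x ∘ₗ LieAlgebra.ad R L y) g
    (fun z hz ↦ K.lie_mem x.2 (K.lie_mem y.2 hz)) hg c hgK).symm

end PID

namespace Matrix

theorem trace_eq_zero_of_transpose_eq_neg {R m : Type*} [AddCommGroup R] [IsAddTorsionFree R]
    [Fintype m] {A : Matrix m m R} (hA : Aᵀ = -A) : A.trace = 0 :=
  neg_eq_self.mp (by rw [← trace_neg, ← hA, trace_transpose])

variable {R m : Type*} [CommRing R] [Fintype m] [DecidableEq m]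

theorem trace_linearMap_eq_sum_single (f : Module.End R (Matrix m m R)) :
    LinearMap.trace R _ f = ∑ i, ∑ j, f (single i j 1) i j := by
  rw [LinearMap.trace_eq_matrix_trace R (stdBasis R m m), trace, Fintype.sum_prod_type]
  simp [LinearMap.toMatrix_apply, stdBasis, single_eq_of_single_single]

theorem trace_mulLeft_comp_mulRight (A B : Matrix m m R) :
    LinearMap.trace R _ (LinearMap.mulLeft R A ∘ₗ LinearMap.mulRight R B) = A.trace * B.trace := by
  rw [trace_linearMap_eq_sum_single]
  simp [mul_apply, single, ite_and, trace, Finset.sum_mul_sum]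

theorem trace_mulLeft_comp_mulRight_comp_transpose (A B : Matrix m m R) :
    LinearMap.trace R _ ((LinearMap.mulLeft R A ∘ₗ LinearMap.mulRight R B) ∘ₗ
      (transposeLinearEquiv m m R R).toLinearMap) = (A * Bᵀ).trace := by
  rw [trace_linearMap_eq_sum_single]
  simp [mul_apply, single, ite_and, trace]

theorem ad_comp_ad_eq_mulLeft_comp_mulRight (A B : Matrix m m R) :
    LieAlgebra.ad R (Matrix m m R) A ∘ₗ LieAlgebra.ad R (Matrix m m R) B =
      LinearMap.mulLeft R (A * B) ∘ₗ LinearMap.mulRight R 1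
        - LinearMap.mulLeft R A ∘ₗ LinearMap.mulRight R B
        - LinearMap.mulLeft R B ∘ₗ LinearMap.mulRight R A
        + LinearMap.mulLeft R 1 ∘ₗ LinearMap.mulRight R (B * A) := by
  ext1 M
  simp only [LinearMap.comp_apply, LieAlgebra.ad_apply, Ring.lie_def, LinearMap.add_apply,
    LinearMap.sub_apply, LinearMap.mulLeft_apply, LinearMap.mulRight_apply]
  noncomm_ring

theorem trace_ad_comp_ad (A B : Matrix m m R) :
    LinearMap.trace R _ (LieAlgebra.ad R (Matrix m m R) A ∘ₗ LieAlgebra.ad R (Matrix m m R) B) =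
      2 * Fintype.card m * (A * B).trace - 2 * A.trace * B.trace := by
  simp only [ad_comp_ad_eq_mulLeft_comp_mulRight, map_add, map_sub, trace_mulLeft_comp_mulRight,
    trace_one, trace_mul_comm B A]
  ring

theorem trace_ad_comp_ad_comp_transpose (A B : Matrix m m R) :
    LinearMap.trace R _
        ((LieAlgebra.ad R (Matrix m m R) A ∘ₗ LieAlgebra.ad R (Matrix m m R) B) ∘ₗ
          (transposeLinearEquiv m m R R).toLinearMap) =
      2 * (A * B).trace - 2 * (A * Bᵀ).trace := by
  simp only [ad_comp_ad_eq_mulLeft_comp_mulRight, LinearMap.add_comp, LinearMap.sub_comp,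
    map_add, map_sub, trace_mulLeft_comp_mulRight_comp_transpose]
  have hBA : (B * Aᵀ).trace = (A * Bᵀ).trace := by
    rw [← trace_transpose, transpose_mul, transpose_transpose]
  rw [transpose_one, mul_one, one_mul, trace_transpose, trace_mul_comm B A, hBA]
  ring

end Matrix

theorem mem_so_iff {n : ℕ} {M : Matrix (Fin n) (Fin n) ℝ} : M ∈ so n ↔ Mᵀ = -M := by
  simp [mem_skewAdjointMatricesLieSubalgebra, mem_skewAdjointMatricesSubmodule,
    Matrix.IsSkewAdjoint, Matrix.IsAdjointPair]

theorem sub_transpose_mem_so {n : ℕ} (M : Matrix (Fin n) (Fin n) ℝ) : M - Mᵀ ∈ so n :=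
  mem_so_iff.mpr (by rw [Matrix.transpose_sub, Matrix.transpose_transpose, neg_sub])

/-- **The Killing form of `𝔰𝔬(n)`.** For skew-symmetric matrices `X, Y ∈ 𝔰𝔬(n)`, the Killing
form `B(X,Y) = tr(ad X ∘ ad Y)` equals `(n − 2)·tr(XY)`; equivalently,
`−B(X,Y) = (n − 2)·tr(X Yᵀ)`. -/
theorem killingForm_so_eq {n : ℕ} (X Y : so n) :
    killingForm ℝ (so n) X Y =
        ((n : ℝ) - 2) * Matrix.trace ((X : Matrix (Fin n) (Fin n) ℝ) * (Y : Matrix (Fin n) (Fin n) ℝ))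
      ∧
    -killingForm ℝ (so n) X Y =
        ((n : ℝ) - 2) *
          Matrix.trace ((X : Matrix (Fin n) (Fin n) ℝ) * (Y : Matrix (Fin n) (Fin n) ℝ)ᵀ) := by
  have hX : (X : Matrix (Fin n) (Fin n) ℝ)ᵀ = -X := mem_so_iff.mp X.2
  have hY : (Y : Matrix (Fin n) (Fin n) ℝ)ᵀ = -Y := mem_so_iff.mp Y.2
  have hB : killingForm ℝ (so n) X Y = (n - 2) * (X * Y : Matrix (Fin n) (Fin n) ℝ).trace := by
    have h2B := (so n).mul_killingForm_eq_trace_comp X Y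
      (LinearMap.id - (Matrix.transposeLinearEquiv _ _ ℝ ℝ).toLinearMap) sub_transpose_mem_so 2
      fun M hM ↦ by simp [mem_so_iff.mp hM, two_smul]
    rw [LinearMap.comp_sub, LinearMap.comp_id, map_sub, Matrix.trace_ad_comp_ad,
      Matrix.trace_ad_comp_ad_comp_transpose, Matrix.trace_eq_zero_of_transpose_eq_neg hX, hY,
      Matrix.mul_neg, Matrix.trace_neg, Fintype.card_fin] at h2B
    linarith
  refine ⟨hB, ?_⟩
  rw [hB, hY, Matrix.mul_neg, Matrix.trace_neg, mul_neg]
end
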